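/- Let E and F be A-modules with K-linear T-actions compatible with multiplication and let φ : E → F be an A-linear T-equivariant map. Let (ẽ_i)_{i∈I} be an A-basis of E with each ẽ_i a weight vector with character χ_i, and let (f̃_j)_{j∈J} be an A-basis of F with each f̃_j a weight vector with character η_j. Suppose φ is minimal in the sense that for every finitely supported family (c_i) of elements of K, Σ_i c_i • φ(ẽ_i) ∈ 𝔪 • (range φ) implies c_i = 0 for all i. Then for every i: (1) φ(ẽ_i) ≠ 0; and (2) whenever a monomial x^α occurs in the support of the f̃_ĵ-coordinate of φ(ẽ_i), one has χ_i = χ^α · η_ĵ. -/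

import Mathlib

/-!
Since the action on `A` is by algebra automorphisms scaling each variable, it multiplies the
coefficient of `x^β` in any polynomial by `χ^β(τ)`. Writing `φ(ẽ_i) = ∑ a_j f̃_j` and applying
`τ`, the weight conditions force `η_j(τ) · τ(a_j) = χ_i(τ) · a_j`; comparing the coefficients of a
monomial `x^α` occurring in `a_ĵ` gives `χ_i = χ^α η_ĵ`. Nonvanishing is the case `c = δ_i` of
minimality.
-/

namespace Representation

def IsWeightVector {k G V : Type*} [CommSemiring k] [Monoid G] [AddCommMonoid V] [Module k V]
    (ρ : Representation k G V) (χ : G →* kˣ) (v : V) : Prop :=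
  ∀ g, ρ g v = (χ g : k) • v

section Semiring

variable {k G A : Type*} [CommSemiring k] [Semiring A] [Algebra k A]

theorem map_one_of_map_mul [Group G] {ρ : Representation k G A}
    (hmul : ∀ g a b, ρ g (a * b) = ρ g a * ρ g b) (g : G) : ρ g 1 = 1 := by
  calc ρ g 1 = ρ g 1 * ρ g (ρ g⁻¹ 1) := by rw [self_inv_apply, mul_one]
    _ = 1 := by rw [← hmul, one_mul, self_inv_apply]

theorem isWeightVector_one [Group G] {ρ : Representation k G A}
    (hmul : ∀ g a b, ρ g (a * b) = ρ g a * ρ g b) : ρ.IsWeightVector 1 1 := fun g => by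
  rw [map_one_of_map_mul hmul, MonoidHom.one_apply, Units.val_one, one_smul]

theorem IsWeightVector.mul [Monoid G] {ρ : Representation k G A}
    (hmul : ∀ g a b, ρ g (a * b) = ρ g a * ρ g b) {χ ψ : G →* kˣ} {a b : A}
    (ha : ρ.IsWeightVector χ a) (hb : ρ.IsWeightVector ψ b) :
    ρ.IsWeightVector (χ * ψ) (a * b) := fun g => by
  rw [hmul, ha, hb, smul_mul_smul_comm, MonoidHom.mul_apply, Units.val_mul]

theorem IsWeightVector.pow [Group G] {ρ : Representation k G A}
    (hmul : ∀ g a b, ρ g (a * b) = ρ g a * ρ g b) {χ : G →* kˣ} {a : A}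
    (ha : ρ.IsWeightVector χ a) (m : ℕ) : ρ.IsWeightVector (χ ^ m) (a ^ m) := by
  induction m with
  | zero => simpa only [pow_zero a, pow_zero χ] using isWeightVector_one hmul
  | succ m ih => simpa only [pow_succ a, pow_succ χ] using ih.mul hmul ha

end Semiring

theorem IsWeightVector.prod {k G A ι : Type*} [CommSemiring k] [Group G] [CommSemiring A]
    [Algebra k A] {ρ : Representation k G A} (hmul : ∀ g a b, ρ g (a * b) = ρ g a * ρ g b)
    (s : Finset ι) {χ : ι → G →* kˣ} {a : ι → A} (ha : ∀ i ∈ s, ρ.IsWeightVector (χ i) (a i)) :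
    ρ.IsWeightVector (∏ i ∈ s, χ i) (∏ i ∈ s, a i) := by
  classical
  induction s using Finset.induction_on with
  | empty => simpa only [Finset.prod_empty] using isWeightVector_one hmul
  | insert i s hi ih =>
    rw [Finset.prod_insert hi, Finset.prod_insert hi]
    exact (ha i (Finset.mem_insert_self i s)).mul hmul
      (ih fun j hj => ha j (Finset.mem_insert_of_mem hj))

end Representation

namespace MvPolynomial

open Representation

variable {R σ G : Type*} [CommSemiring R] [Fintype σ] [Group G]
  {ρ : Representation R G (MvPolynomial σ R)} {χ : σ → G →* Rˣ}

theorem isWeightVector_monomial_one (hmul : ∀ g p q, ρ g (p * q) = ρ g p * ρ g q)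
    (hX : ∀ k, ρ.IsWeightVector (χ k) (X k)) (α : σ →₀ ℕ) :
    ρ.IsWeightVector (∏ k, χ k ^ α k) (monomial α 1) := by
  have hmonomial : monomial α (1 : R) = ∏ k, X k ^ α k := by
    rw [monomial_eq, C_1, one_mul, Finsupp.prod_fintype _ _ fun k => pow_zero _]
  rw [hmonomial]
  exact IsWeightVector.prod hmul _ fun k _ => (hX k).pow hmul (α k)

theorem coeff_apply_of_isWeightVector_X (hmul : ∀ g p q, ρ g (p * q) = ρ g p * ρ g q)
    (hX : ∀ k, ρ.IsWeightVector (χ k) (X k)) (g : G) (β : σ →₀ ℕ) (p : MvPolynomial σ R) :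
    coeff β (ρ g p) = ((∏ k, χ k ^ β k) g : R) * coeff β p := by
  classical
  induction p using MvPolynomial.induction_on' with
  | monomial α a =>
    rw [← mul_one a, ← smul_eq_mul, ← smul_monomial, map_smul,
      isWeightVector_monomial_one hmul hX α g, coeff_smul, coeff_smul, coeff_smul,
      coeff_monomial]
    split_ifs with h
    · subst h; simp only [smul_eq_mul]; ring
    · simp only [smul_zero, mul_zero]
  | add p q hp hq => rw [map_add, coeff_add, coeff_add, hp, hq, mul_add]

end MvPolynomial

namespace Module.Basis

open Representation

variable {R A M ι G : Type*} [CommSemiring R] [Semiring A] [Algebra R A] [AddCommMonoid M]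
  [Module R M] [Module A M] [IsScalarTower R A M] [Monoid G]
  {ρA : Representation R G A} {ρM : Representation R G M}

theorem repr_rep_apply (hM : ∀ g (a : A) (m : M), ρM g (a • m) = ρA g a • ρM g m)
    (b : Basis ι A M) {χ : ι → G →* Rˣ} (hb : ∀ j, ρM.IsWeightVector (χ j) (b j))
    (g : G) (m : M) (j : ι) : b.repr (ρM g m) j = (χ j g : R) • ρA g (b.repr m j) := by
  have hm : ρM g m = (b.repr m).sum fun i a => ((χ i g : R) • ρA g a) • b i := by
    conv_lhs => rw [← b.linearCombination_repr m, Finsupp.linearCombination_apply]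
    rw [map_finsuppSum]
    refine Finsupp.sum_congr fun i _ => ?_
    rw [hM, hb, smul_comm, smul_assoc]
  rw [hm, map_finsuppSum, Finsupp.sum_apply, Finsupp.sum_eq_single j]
  · rw [map_smul, repr_self, Finsupp.smul_single_one, Finsupp.single_eq_same]
  · intro i _ hij
    rw [map_smul, repr_self, Finsupp.smul_single_one, Finsupp.single_eq_of_ne hij.symm]
  · intro _
    rw [map_zero, smul_zero, zero_smul, map_zero, Finsupp.zero_apply]

end Module.Basis

namespace Representation.IsWeightVector

open MvPolynomial

variable {R σ G M ι : Type*} [CommSemiring R] [IsDomain R] [Fintype σ] [Group G]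
  [AddCommMonoid M] [Module R M] [Module (MvPolynomial σ R) M]
  [IsScalarTower R (MvPolynomial σ R) M]
  {ρA : Representation R G (MvPolynomial σ R)} {ρM : Representation R G M}

theorem eq_prod_pow_mul_of_mem_support_repr
    (hmul : ∀ g p q, ρA g (p * q) = ρA g p * ρA g q) {χ : σ → G →* Rˣ}
    (hX : ∀ k, ρA.IsWeightVector (χ k) (X k))
    (hM : ∀ g (a : MvPolynomial σ R) (m : M), ρM g (a • m) = ρA g a • ρM g m)
    (b : Module.Basis ι (MvPolynomial σ R) M) {η : ι → G →* Rˣ}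
    (hb : ∀ j, ρM.IsWeightVector (η j) (b j)) {ψ : G →* Rˣ} {m : M}
    (hm : ρM.IsWeightVector ψ m) {j : ι} {α : σ →₀ ℕ} (hα : α ∈ (b.repr m j).support) :
    ψ = (∏ k, χ k ^ α k) * η j := by
  have hcoord (g : G) : (η j g : R) • ρA g (b.repr m j) = (ψ g : R) • b.repr m j := by
    rw [← b.repr_rep_apply hM hb, hm g, LinearMapClass.map_smul_of_tower, Finsupp.smul_apply]
  ext g
  have hcoeff := congrArg (coeff α) (hcoord g)
  rw [coeff_smul, coeff_smul, coeff_apply_of_isWeightVector_X hmul hX, smul_eq_mul, smul_eq_mul,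
    ← mul_assoc] at hcoeff
  rw [MonoidHom.mul_apply, Units.val_mul, ← mul_right_cancel₀ (mem_support_iff.mp hα) hcoeff,
    mul_comm]

end Representation.IsWeightVector

theorem summary_weights_basis_of_weight_vectors_general
    {K : Type*} [Field K] {T : Type*} [Group T] {n : ℕ}
    (ρA : Representation K T (MvPolynomial (Fin n) K))
    (hmulA : ∀ (τ : T) (p q : MvPolynomial (Fin n) K), ρA τ (p * q) = ρA τ p * ρA τ q)
    (χv : Fin n → (T →* Kˣ))
    (hX : ∀ (i : Fin n) (τ : T),
      ρA τ (MvPolynomial.X i) = ((χv i τ : Kˣ) : K) • (MvPolynomial.X i : MvPolynomial (Fin n) K))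
    {E F : Type*}
    [AddCommGroup E] [Module K E] [Module (MvPolynomial (Fin n) K) E]
    [IsScalarTower K (MvPolynomial (Fin n) K) E]
    [AddCommGroup F] [Module K F] [Module (MvPolynomial (Fin n) K) F]
    [IsScalarTower K (MvPolynomial (Fin n) K) F]
    (ρE : Representation K T E) (ρF : Representation K T F)
    (hF : ∀ (τ : T) (a : MvPolynomial (Fin n) K) (m : F), ρF τ (a • m) = ρA τ a • ρF τ m)
    (φ : E →ₗ[MvPolynomial (Fin n) K] F)
    (hφ : ∀ (τ : T) (e : E), φ (ρE τ e) = ρF τ (φ e))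
    {I J : Type*}
    (bE : Module.Basis I (MvPolynomial (Fin n) K) E)
    (χE : I → (T →* Kˣ))
    (hbE : ∀ (i : I) (τ : T), ρE τ (bE i) = ((χE i τ : Kˣ) : K) • bE i)
    (bF : Module.Basis J (MvPolynomial (Fin n) K) F)
    (η : J → (T →* Kˣ))
    (hbF : ∀ (j : J) (τ : T), ρF τ (bF j) = ((η j τ : Kˣ) : K) • bF j)
    (hmin : ∀ c : I →₀ K,
      (c.sum fun i a => a • φ (bE i)) ∈
        (Ideal.span (Set.range (MvPolynomial.X : Fin n → MvPolynomial (Fin n) K))) •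
          LinearMap.range φ
      → c = 0) :
    ∀ i : I,
      φ (bE i) ≠ 0 ∧
      ∀ (jhat : J) (α : Fin n →₀ ℕ), α ∈ (bF.repr (φ (bE i)) jhat).support →
        χE i = (∏ k, χv k ^ α k) * η jhat := by
  intro i
  have hweight : ρF.IsWeightVector (χE i) (φ (bE i)) := fun τ => by
    rw [← hφ, hbE, φ.map_smul_of_tower]
  refine ⟨fun hzero => ?_, fun jhat α hα => hweight.eq_prod_pow_mul_of_mem_support_repr
    hmulA hX hF bF hbF hα⟩
  have hδ := hmin (Finsupp.single i 1) <| by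
    rw [Finsupp.sum_single_index (zero_smul K (φ (bE i))), one_smul, hzero]
    exact Submodule.zero_mem _
  exact one_ne_zero (Finsupp.single_eq_zero.mp hδ)

/-- Let `φ : E → F` be an `A`-linear `T`-equivariant map, `(ẽ i)` an `A`-basis of `E` of
weight vectors with characters `χE i`, and `(f̃ j)` an `A`-basis of `F` of weight vectors with
characters `η j`.  If `φ` is minimal (the residue classes of the `φ (ẽ i)` modulo
`𝔪 • range φ` are `K`-linearly independent), then each `φ (ẽ i) ≠ 0`, and whenever a monomial
`x^α` occurs in the support of the `f̃ jhat`-coordinate of `φ (ẽ i)` one has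
`χE i = χ^α · η jhat`. -/
theorem summary_weights_basis_of_weight_vectors
    {K : Type*} [Field K] {T : Type*} [Group T] {n : ℕ}
    (ρA : Representation K T (MvPolynomial (Fin n) K))
    (hmulA : ∀ (τ : T) (p q : MvPolynomial (Fin n) K), ρA τ (p * q) = ρA τ p * ρA τ q)
    (χv : Fin n → (T →* Kˣ))
    (hX : ∀ (i : Fin n) (τ : T),
      ρA τ (MvPolynomial.X i) = ((χv i τ : Kˣ) : K) • (MvPolynomial.X i : MvPolynomial (Fin n) K))
    {E F : Type*}
    [AddCommGroup E] [Module K E] [Module (MvPolynomial (Fin n) K) E]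
    [IsScalarTower K (MvPolynomial (Fin n) K) E]
    [AddCommGroup F] [Module K F] [Module (MvPolynomial (Fin n) K) F]
    [IsScalarTower K (MvPolynomial (Fin n) K) F]
    (ρE : Representation K T E) (ρF : Representation K T F)
    (hE : ∀ (τ : T) (a : MvPolynomial (Fin n) K) (m : E), ρE τ (a • m) = ρA τ a • ρE τ m)
    (hF : ∀ (τ : T) (a : MvPolynomial (Fin n) K) (m : F), ρF τ (a • m) = ρA τ a • ρF τ m)
    (φ : E →ₗ[MvPolynomial (Fin n) K] F)
    (hφ : ∀ (τ : T) (e : E), φ (ρE τ e) = ρF τ (φ e))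
    {I J : Type*}
    (bE : Module.Basis I (MvPolynomial (Fin n) K) E)
    (χE : I → (T →* Kˣ))
    (hbE : ∀ (i : I) (τ : T), ρE τ (bE i) = ((χE i τ : Kˣ) : K) • bE i)
    (bF : Module.Basis J (MvPolynomial (Fin n) K) F)
    (η : J → (T →* Kˣ))
    (hbF : ∀ (j : J) (τ : T), ρF τ (bF j) = ((η j τ : Kˣ) : K) • bF j)
    (hmin : ∀ c : I →₀ K,
      (c.sum fun i a => a • φ (bE i)) ∈
        (Ideal.span (Set.range (MvPolynomial.X : Fin n → MvPolynomial (Fin n) K))) •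
          LinearMap.range φ
      → c = 0) :
    ∀ i : I,
      φ (bE i) ≠ 0 ∧
      ∀ (jhat : J) (α : Fin n →₀ ℕ), α ∈ (bF.repr (φ (bE i)) jhat).support →
        χE i = (∏ k, χv k ^ α k) * η jhat :=
  summary_weights_basis_of_weight_vectors_general ρA hmulA χv hX ρE ρF hF φ hφ bE χE hbE bF η hbF
    hmin
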